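/- For all real ξ > 0 and 0 < β ≤ 1, |(1/2)sinc²(ξ/2) - (1/2)sinc(ξ/2)cos(ξ/2)| ≤ c·ξ^β holds with c = 1/2. -/

import Mathlib

noncomputable def sinc (x : ℝ) : ℝ := if x = 0 then 1 else Real.sin x / x

open Real in
lemma aux_deriv_bound (x : ℝ) (hx : 0 ≤ x) :
    |Real.sin x - x * Real.cos x| ≤ x ^ 3 / 3 := by
  have key : ∀ (ε : ℝ), ε = 1 ∨ ε = -1 →
      ε * (Real.sin x - x * Real.cos x) ≤ x ^ 3 / 3 := by
    intro ε hε
    set f : ℝ → ℝ := fun t => t ^ 3 / 3 - ε * (Real.sin t - t * Real.cos t) with hf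
    have hderiv : ∀ t : ℝ, HasDerivAt f (t ^ 2 - ε * (t * Real.sin t)) t := by
      intro t
      have h1 : HasDerivAt (fun t : ℝ => t ^ 3 / 3) (3 * t ^ 2 / 3) t :=
        (hasDerivAt_pow 3 t).div_const 3
      have h2 : HasDerivAt (fun t : ℝ => Real.sin t - t * Real.cos t)
          (Real.cos t - (1 * Real.cos t + t * (-Real.sin t))) t :=
        (Real.hasDerivAt_sin t).sub ((hasDerivAt_id t).mul (Real.hasDerivAt_cos t))
      have := h1.sub ((h2.const_mul ε))
      exact this.congr_deriv (by ring)
    have hmono : MonotoneOn f (Set.Ici (0 : ℝ)) := by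
      apply monotoneOn_of_deriv_nonneg (convex_Ici 0)
      · exact Continuous.continuousOn (by
          continuity)
      · intro t ht
        exact (hderiv t).differentiableAt.differentiableWithinAt
      · intro t ht
        rw [interior_Ici] at ht
        rw [(hderiv t).deriv]
        have ht0 : 0 < t := ht
        have hs1 : Real.sin t ≤ t := Real.sin_le ht0.le
        have hs2 : -t ≤ Real.sin t := by
          have := Real.abs_sin_le_abs (x := t)
          rw [abs_of_nonneg ht0.le] at this
          linarith [abs_le.1 this]
        rcases hε with h | h <;> subst h <;> nlinarith
    have h0 : f 0 ≤ f x := hmono (Set.mem_Ici.2 le_rfl) (Set.mem_Ici.2 hx) hx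
    simp only [hf] at h0
    norm_num at h0
    linarith
  rcases abs_cases (Real.sin x - x * Real.cos x) with ⟨h, _⟩ | ⟨h, _⟩
  · rw [h]; simpa using key 1 (Or.inl rfl)
  · rw [h]; have := key (-1) (Or.inr rfl); linarith

theorem stmt_17 (ξ β : ℝ) (hξ : 0 < ξ) (hβ1 : 0 < β) (hβ2 : β ≤ 1) :
    |(1 / 2) * sinc (ξ / 2) ^ 2 - (1 / 2) * sinc (ξ / 2) * Real.cos (ξ / 2)|
      ≤ (1 / 2) * ξ ^ β := by
  set x := ξ / 2 with hxdef
  have hx0 : 0 < x := by positivity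
  have hxne : x ≠ 0 := hx0.ne'
  have hsinc : sinc x = Real.sin x / x := by simp [sinc, hxne]
  have hfact : (1 / 2) * sinc x ^ 2 - (1 / 2) * sinc x * Real.cos x
      = (1 / 2) * (Real.sin x * (Real.sin x - x * Real.cos x)) / x ^ 2 := by
    rw [hsinc]; field_simp
  rw [hfact]
  have habs : |(1 / 2) * (Real.sin x * (Real.sin x - x * Real.cos x)) / x ^ 2|
      = (1 / 2) * (|Real.sin x| * |Real.sin x - x * Real.cos x|) / x ^ 2 := by
    rw [abs_div, abs_mul, abs_mul, abs_of_pos (by norm_num : (0:ℝ) < 1/2),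
      abs_of_pos (by positivity : (0:ℝ) < x ^ 2)]
  rw [habs]
  have hcube := aux_deriv_bound x hx0.le
  have hsle : |Real.sin x| ≤ x := by
    have := Real.abs_sin_le_abs (x := x); rwa [abs_of_pos hx0] at this
  have hsle1 : |Real.sin x| ≤ 1 := Real.abs_sin_le_one x
  rcases le_or_gt ξ 1 with hcase | hcase
  · -- ξ ≤ 1 : ξ^β ≥ ξ
    have hrpow : ξ ≤ ξ ^ β := by
      calc ξ = ξ ^ (1 : ℝ) := (Real.rpow_one ξ).symm
        _ ≤ ξ ^ β := Real.rpow_le_rpow_of_exponent_ge hξ hcase hβ2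
    have hbound : (1 / 2) * (|Real.sin x| * |Real.sin x - x * Real.cos x|) / x ^ 2
        ≤ (1 / 2) * ξ := by
      have h1 : |Real.sin x| * |Real.sin x - x * Real.cos x| ≤ x * (x ^ 3 / 3) := by
        apply mul_le_mul hsle hcube (abs_nonneg _) hx0.le
      rw [div_le_iff₀ (by positivity : (0:ℝ) < x ^ 2)]
      have hx12 : x ≤ 1 / 2 := by rw [hxdef]; linarith
      have hξx : ξ = 2 * x := by rw [hxdef]; ring
      nlinarith [pow_pos hx0 3, pow_pos hx0 2, mul_nonneg (abs_nonneg (Real.sin x)) (abs_nonneg (Real.sin x - x * Real.cos x))]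
    calc (1 / 2) * (|Real.sin x| * |Real.sin x - x * Real.cos x|) / x ^ 2
        ≤ (1 / 2) * ξ := hbound
      _ ≤ (1 / 2) * ξ ^ β := by linarith
  · -- ξ > 1 : ξ^β ≥ 1
    have hrpow : (1:ℝ) ≤ ξ ^ β := Real.one_le_rpow hcase.le hβ1.le
    have hbound : (1 / 2) * (|Real.sin x| * |Real.sin x - x * Real.cos x|) / x ^ 2
        ≤ 1 / 2 := by
      rcases le_or_gt x 3 with hx3 | hx3
      · have h1 : |Real.sin x| * |Real.sin x - x * Real.cos x| ≤ 1 * (x ^ 3 / 3) :=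
          mul_le_mul hsle1 hcube (abs_nonneg _) (by norm_num)
        rw [div_le_iff₀ (by positivity : (0:ℝ) < x ^ 2)]
        nlinarith
      · have h2 : |Real.sin x - x * Real.cos x| ≤ 1 + x := by
          have hc := Real.abs_cos_le_one x
          have := abs_sub (Real.sin x) (x * Real.cos x)
          calc |Real.sin x - x * Real.cos x| ≤ |Real.sin x| + |x * Real.cos x| :=
                abs_sub _ _
            _ ≤ 1 + x := by
                rw [abs_mul, abs_of_pos hx0]
                have : x * |Real.cos x| ≤ x * 1 :=
                  mul_le_mul_of_nonneg_left hc hx0.le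
                linarith
        have h1 : |Real.sin x| * |Real.sin x - x * Real.cos x| ≤ 1 * (1 + x) :=
          mul_le_mul hsle1 h2 (abs_nonneg _) (by norm_num)
        rw [div_le_iff₀ (by positivity : (0:ℝ) < x ^ 2)]
        nlinarith
    calc (1 / 2) * (|Real.sin x| * |Real.sin x - x * Real.cos x|) / x ^ 2
        ≤ 1 / 2 := hbound
      _ ≤ (1 / 2) * ξ ^ β := by linarith
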